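/- Let n ≥ 2, let (K_n, λ) be a random simple temporal graph on n vertices, let δ ∈ (0,1), and let k be an integer with 2 ≤ k ≤ n. Then E[X^{(k)}] ≥ (n/k)^k · (k/2)² · δ^{C(k,2)−1} · (1−δ), where C(k,2) = k(k−1)/2. -/

import Mathlib

/-!
By linearity of expectation, `E[X^{(k)}] = C(n,k) · p`, where `p` is the probability that the
`m = C(k,2)` independent uniform labels inside a fixed `k`-set all lie within `δ` of each other.
For each label, the event "this label is the strict minimum and all others lie at most `δ` above
it" has probability at least `δ^(m-1) (1-δ)` (condition on the label lying in `[0, 1-δ]`), and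
these `m` events are pairwise disjoint, so `p ≥ m δ^(m-1) (1-δ)`. It remains to use
`C(n,k) ≥ (n/k)^k` and `C(k,2) ≥ (k/2)^2`.
-/

open MeasureTheory ProbabilityTheory

/-- The edge set of the complete graph `K_n` on vertex set `Fin n`:
unordered pairs of distinct vertices. -/
def EdgeKn (n : ℕ) : Type := {e : Sym2 (Fin n) // ¬ e.IsDiag}

/-- `Q` is a `δ`-temporal clique for the labeling `lam` if any two edges with
both endpoints in `Q` carry labels at most `δ` apart. -/
def IsTemporalClique {n : ℕ} (lam : EdgeKn n → ℝ) (δ : ℝ) (Q : Finset (Fin n)) : Prop :=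
  ∀ e e' : EdgeKn n, (∀ v ∈ e.1, v ∈ Q) → (∀ v ∈ e'.1, v ∈ Q) →
    |lam e - lam e'| ≤ δ

open scoped Classical in
/-- The number of `k`-element vertex subsets of `Fin n` that are `δ`-temporal cliques. -/
noncomputable def cliqueCount {n : ℕ} (lam : EdgeKn n → ℝ) (δ : ℝ) (k : ℕ) : ℕ :=
  ((Finset.univ.powersetCard k).filter (fun Q => IsTemporalClique lam δ Q)).card

open Finset

theorem Nat.pow_le_choose_mul_pow {n k : ℕ} (hkn : k ≤ n) : n ^ k ≤ n.choose k * k ^ k := by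
  have key : ∏ i ∈ range k, n * (k - i) ≤ ∏ i ∈ range k, (n - i) * k :=
    prod_le_prod' fun i hi => by
      have hik : i ≤ k := (mem_range.1 hi).le
      zify [hik, hik.trans hkn]
      nlinarith
  rw [prod_mul_distrib, prod_mul_distrib, prod_const, prod_const, card_range,
    ← Nat.descFactorial_eq_prod_range, ← Nat.descFactorial_eq_prod_range,
    Nat.descFactorial_self, Nat.descFactorial_eq_factorial_mul_choose] at key
  exact Nat.le_of_mul_le_mul_right (key.trans_eq (by ring)) k.factorial_pos

theorem Nat.div_pow_le_choose {n k : ℕ} (hkn : k ≤ n) : ((n : ℝ) / k) ^ k ≤ n.choose k := by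
  obtain rfl | hk := k.eq_zero_or_pos
  · simp
  rw [div_pow, div_le_iff₀ (by positivity)]
  exact_mod_cast Nat.pow_le_choose_mul_pow hkn

theorem Nat.sq_half_le_choose_two {k : ℕ} (hk : 2 ≤ k) :
    ((k : ℝ) / 2) ^ 2 ≤ k.choose 2 := by
  have : (2 : ℝ) ≤ k := by exact_mod_cast hk
  rw [Nat.cast_choose_two]
  nlinarith

noncomputable abbrev unitUniform : Measure ℝ := volume.restrict (Set.Icc 0 1)

instance : IsProbabilityMeasure unitUniform :=
  ⟨by simp⟩

theorem unitUniform_Icc_zero {a : ℝ} (ha : a ≤ 1) :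
    unitUniform (Set.Icc 0 a) = ENNReal.ofReal a := by
  rw [Measure.restrict_apply measurableSet_Icc, Set.inter_eq_left.2 (Set.Icc_subset_Icc le_rfl ha),
    Real.volume_Icc, sub_zero]

theorem unitUniform_Ioc {t δ : ℝ} (ht : 0 ≤ t) (htδ : t + δ ≤ 1) :
    unitUniform (Set.Ioc t (t + δ)) = ENNReal.ofReal δ := by
  rw [Measure.restrict_apply measurableSet_Ioc,
    Set.inter_eq_left.2 (Set.Ioc_subset_Icc_self.trans (Set.Icc_subset_Icc ht htδ)),
    Real.volume_Ioc, add_sub_cancel_left]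

def spreadAtMost (ι : Type*) (δ : ℝ) : Set (ι → ℝ) := {x | ∀ i j, |x i - x j| ≤ δ}

theorem measurableSet_spreadAtMost (ι : Type*) [Countable ι] (δ : ℝ) :
    MeasurableSet (spreadAtMost ι δ) := by
  unfold spreadAtMost; measurability

section UniformSpread

variable {ι : Type*} [Fintype ι] {δ : ℝ}

theorem le_measure_pi_unitUniform_minAt [DecidableEq ι] (i : ι) (hδ : 0 ≤ δ) :
    ENNReal.ofReal δ ^ (Fintype.card ι - 1) * ENNReal.ofReal (1 - δ) ≤
      Measure.pi (fun _ : ι => unitUniform)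
        {x | ∀ j ≠ i, x j ∈ Set.Ioc (x i) (x i + δ)} := by
  let i' : {j // j = i} := ⟨i, rfl⟩
  let C : Set (({j // j = i} → ℝ) × ({j // ¬ j = i} → ℝ)) :=
    {z | ∀ j, z.2 j ∈ Set.Ioc (z.1 i') (z.1 i' + δ)}
  have hC : MeasurableSet C := by measurability
  have hpre : {x : ι → ℝ | ∀ j ≠ i, x j ∈ Set.Ioc (x i) (x i + δ)} =
      MeasurableEquiv.piEquivPiSubtypeProd (fun _ => ℝ) (· = i) ⁻¹' C := by
    ext x
    simp [C, i', MeasurableEquiv.piEquivPiSubtypeProd, Equiv.piEquivPiSubtypeProd]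
  have hfiber (u : {j // j = i} → ℝ) :
      Prod.mk u ⁻¹' C = Set.univ.pi fun _ => Set.Ioc (u i') (u i' + δ) := by
    ext y; simp [C]
  rw [hpre, (measurePreserving_piEquivPiSubtypeProd _ _).measure_preimage hC.nullMeasurableSet,
    Measure.prod_apply hC]
  simp_rw [hfiber, Measure.pi_pi, prod_const, card_univ, Fintype.card_subtype_compl,
    Fintype.card_unique]
  let s : Set ({j // j = i} → ℝ) := Function.eval i' ⁻¹' Set.Icc 0 (1 - δ)
  calc ENNReal.ofReal δ ^ (Fintype.card ι - 1) * ENNReal.ofReal (1 - δ)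
      = ∫⁻ _ in s, ENNReal.ofReal δ ^ (Fintype.card ι - 1)
          ∂Measure.pi fun _ => unitUniform := by
        rw [setLIntegral_const, (measurePreserving_eval _ i').measure_preimage
          measurableSet_Icc.nullMeasurableSet, unitUniform_Icc_zero (by linarith)]
    _ = ∫⁻ u in s, unitUniform (Set.Ioc (u i') (u i' + δ)) ^ (Fintype.card ι - 1)
          ∂Measure.pi fun _ => unitUniform :=
        setLIntegral_congr_fun (measurable_pi_apply i' measurableSet_Icc) fun u hu => by
          rw [unitUniform_Ioc hu.1 (by linarith [hu.2])]
    -- the two sides carry different, but equal, `Fintype` instances on `{j // j = i}`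
    _ ≤ _ := by convert setLIntegral_le_lintegral s _

theorem le_measure_pi_unitUniform_spreadAtMost (hδ : 0 ≤ δ) :
    ENNReal.ofReal (Fintype.card ι * δ ^ (Fintype.card ι - 1) * (1 - δ)) ≤
      Measure.pi (fun _ : ι => unitUniform) (spreadAtMost ι δ) := by
  classical
  let B (i : ι) : Set (ι → ℝ) := {x | ∀ j ≠ i, x j ∈ Set.Ioc (x i) (x i + δ)}
  have hB (i : ι) : MeasurableSet (B i) := by measurability
  have hdisj : Pairwise (Function.onFun Disjoint B) := fun i j hij =>
    Set.disjoint_left.2 fun x hi hj => ((hi j hij.symm).1.trans (hj i hij).1).false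
  have hsub : (⋃ i, B i) ⊆ spreadAtMost ι δ := by
    simp only [Set.iUnion_subset_iff]
    intro i x hx a b
    have bound (j : ι) : x i ≤ x j ∧ x j ≤ x i + δ := by
      obtain rfl | hj := eq_or_ne j i
      · exact ⟨le_rfl, by linarith⟩
      · exact ⟨(hx j hj).1.le, (hx j hj).2⟩
    rw [abs_sub_le_iff]
    constructor <;> linarith [bound a, bound b]
  calc ENNReal.ofReal (Fintype.card ι * δ ^ (Fintype.card ι - 1) * (1 - δ))
      = ∑ _i : ι, ENNReal.ofReal δ ^ (Fintype.card ι - 1) * ENNReal.ofReal (1 - δ) := by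
        rw [ENNReal.ofReal_mul (by positivity), ENNReal.ofReal_mul (by positivity),
          ENNReal.ofReal_natCast, ENNReal.ofReal_pow hδ, sum_const, card_univ, nsmul_eq_mul,
          mul_assoc]
    _ ≤ ∑ i, Measure.pi (fun _ : ι => unitUniform) (B i) :=
        sum_le_sum fun i _ => le_measure_pi_unitUniform_minAt i hδ
    _ = Measure.pi (fun _ : ι => unitUniform) (⋃ i, B i) := by
        rw [measure_iUnion hdisj hB, tsum_fintype]
    _ ≤ _ := measure_mono hsub

end UniformSpread

theorem integral_card_filter {Ω α : Type*} [MeasurableSpace Ω] (P : Measure Ω)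
    [IsFiniteMeasure P]
    (T : Finset α) (p : α → Ω → Prop) [∀ a ω, Decidable (p a ω)]
    (hp : ∀ a, MeasurableSet {ω | p a ω}) :
    ∫ ω, (#{a ∈ T | p a ω} : ℝ) ∂P = ∑ a ∈ T, P.real {ω | p a ω} := by
  have hcard (ω : Ω) :
      (#{a ∈ T | p a ω} : ℝ) = ∑ a ∈ T, {ω | p a ω}.indicator 1 ω := by
    simp [Set.indicator_apply]
  simp_rw [hcard]
  rw [integral_finsetSum _ fun a _ => (integrable_const 1).indicator (hp a)]
  exact sum_congr rfl fun a _ => integral_indicator_one (hp a)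

instance (n : ℕ) : Fintype (EdgeKn n) :=
  inferInstanceAs (Fintype {e : Sym2 (Fin n) // ¬ e.IsDiag})

section TemporalClique

variable {n : ℕ}

abbrev EdgesWithin (Q : Finset (Fin n)) : Type := {e : EdgeKn n // ∀ v ∈ e.1, v ∈ Q}

theorem card_edgesWithin (Q : Finset (Fin n)) :
    Fintype.card (EdgesWithin Q) = (#Q).choose 2 := by
  refine (Fintype.card_congr (Equiv.subtypeSubtypeEquivSubtypeInter
    (fun z : Sym2 (Fin n) => ¬ z.IsDiag) fun z => ∀ v ∈ z, v ∈ Q)).trans ?_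
  rw [Fintype.card_subtype, ← Sym2.card_image_offDiag, ← Sym2.filter_image_mk_not_isDiag,
    ← sym2_eq_image]
  congr 1
  ext z
  simp [mem_sym2_iff, and_comm]

variable {Ω : Type*}

theorem setOf_isTemporalClique_eq_preimage (lam : EdgeKn n → Ω → ℝ) (δ : ℝ)
    (Q : Finset (Fin n)) :
    {ω | IsTemporalClique (fun e => lam e ω) δ Q} =
      (fun ω (e : EdgesWithin Q) => lam e ω) ⁻¹' spreadAtMost (EdgesWithin Q) δ := by
  ext ω
  exact ⟨fun h i j => h i j i.2 j.2, fun h e e' he he' => h ⟨e, he⟩ ⟨e', he'⟩⟩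

variable [MeasurableSpace Ω] {P : Measure Ω} {lam : EdgeKn n → Ω → ℝ}

theorem measurableSet_isTemporalClique (hmeas : ∀ e, Measurable (lam e)) (δ : ℝ)
    (Q : Finset (Fin n)) : MeasurableSet {ω | IsTemporalClique (fun e => lam e ω) δ Q} := by
  rw [setOf_isTemporalClique_eq_preimage]
  exact (measurable_pi_lambda _ fun e : EdgesWithin Q => hmeas e) (measurableSet_spreadAtMost _ δ)

theorem measure_isTemporalClique (hmeas : ∀ e, Measurable (lam e)) (hindep : iIndepFun lam P)
    (hunif : ∀ e, P.map (lam e) = unitUniform) (δ : ℝ) (Q : Finset (Fin n)) :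
    P {ω | IsTemporalClique (fun e => lam e ω) δ Q} =
      Measure.pi (fun _ : EdgesWithin Q => unitUniform) (spreadAtMost (EdgesWithin Q) δ) := by
  rw [setOf_isTemporalClique_eq_preimage, ← Measure.map_apply
    (measurable_pi_lambda _ fun e : EdgesWithin Q => hmeas e) (measurableSet_spreadAtMost _ δ),
    (hindep.precomp Subtype.val_injective).map_fun_eq_pi_map
      fun e : EdgesWithin Q => (hmeas e).aemeasurable]
  simp_rw [hunif]

theorem le_measureReal_isTemporalClique (hmeas : ∀ e, Measurable (lam e))
    (hindep : iIndepFun lam P) (hunif : ∀ e, P.map (lam e) = unitUniform) {δ : ℝ}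
    (hδ : 0 ≤ δ) (Q : Finset (Fin n)) :
    (#Q).choose 2 * δ ^ ((#Q).choose 2 - 1) * (1 - δ) ≤
      P.real {ω | IsTemporalClique (fun e => lam e ω) δ Q} := by
  have := hindep.isProbabilityMeasure
  have := le_measure_pi_unitUniform_spreadAtMost (ι := EdgesWithin Q) hδ
  rw [card_edgesWithin, ← measure_isTemporalClique hmeas hindep hunif] at this
  exact (ENNReal.ofReal_le_iff_le_toReal (measure_ne_top _ _)).1 this

end TemporalClique

theorem stmt7_general
    {Ω : Type*} [MeasurableSpace Ω] (P : Measure Ω) [IsProbabilityMeasure P]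
    (n : ℕ)
    (lam : EdgeKn n → Ω → ℝ) (hmeas : ∀ e, Measurable (lam e))
    (hindep : iIndepFun lam P)
    (hunif : ∀ e, Measure.map (lam e) P = (volume : Measure ℝ).restrict (Set.Icc 0 1))
    (δ : ℝ) (hδ0 : 0 < δ) (hδ1 : δ < 1) (k : ℕ) (hk2 : 2 ≤ k) (hkn : k ≤ n) :
    ∫ ω, (cliqueCount (fun e => lam e ω) δ k : ℝ) ∂P
      ≥ ((n : ℝ) / (k : ℝ)) ^ k * ((k : ℝ) / 2) ^ 2 * δ ^ (k.choose 2 - 1) * (1 - δ) := by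
  classical
  set m := k.choose 2
  have hclique (Q) (hQ : Q ∈ powersetCard k (univ : Finset (Fin n))) :
      m * δ ^ (m - 1) * (1 - δ) ≤ P.real {ω | IsTemporalClique (fun e => lam e ω) δ Q} := by
    simpa [mem_powersetCard_univ.1 hQ] using
      le_measureReal_isTemporalClique hmeas hindep hunif hδ0.le Q
  have h1δ : 0 ≤ 1 - δ := by linarith
  unfold cliqueCount
  rw [integral_card_filter P _ (fun Q ω => IsTemporalClique (fun e => lam e ω) δ Q)
    (measurableSet_isTemporalClique hmeas δ)]
  calc ((n : ℝ) / k) ^ k * (k / 2) ^ 2 * δ ^ (m - 1) * (1 - δ)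
      = ((n : ℝ) / k) ^ k * ((k / 2) ^ 2 * δ ^ (m - 1) * (1 - δ)) := by ring
    _ ≤ n.choose k * (m * δ ^ (m - 1) * (1 - δ)) := by
        gcongr
        · exact Nat.div_pow_le_choose hkn
        · exact Nat.sq_half_le_choose_two hk2
    _ = ∑ _Q ∈ powersetCard k (univ : Finset (Fin n)), m * δ ^ (m - 1) * (1 - δ) := by
        rw [sum_const, card_powersetCard, card_univ, Fintype.card_fin, nsmul_eq_mul]
    _ ≤ _ := sum_le_sum hclique

/-- In the random simple temporal graph `(K_n, λ)`, for constant `δ ∈ (0,1)` and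
`2 ≤ k ≤ n`, the expected number of `δ`-temporal cliques of size `k` is at least
`(n/k)^k · (k/2)² · δ^(C(k,2)-1) · (1-δ)`. -/
theorem stmt7
    {Ω : Type*} [MeasurableSpace Ω] (P : Measure Ω) [IsProbabilityMeasure P]
    (n : ℕ) (hn : 2 ≤ n)
    (lam : EdgeKn n → Ω → ℝ) (hmeas : ∀ e, Measurable (lam e))
    (hindep : iIndepFun lam P)
    (hunif : ∀ e, Measure.map (lam e) P = (volume : Measure ℝ).restrict (Set.Icc 0 1))
    (δ : ℝ) (hδ0 : 0 < δ) (hδ1 : δ < 1) (k : ℕ) (hk2 : 2 ≤ k) (hkn : k ≤ n) :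
    ∫ ω, (cliqueCount (fun e => lam e ω) δ k : ℝ) ∂P
      ≥ ((n : ℝ) / (k : ℝ)) ^ k * ((k : ℝ) / 2) ^ 2 * δ ^ (k.choose 2 - 1) * (1 - δ) :=
  stmt7_general P n lam hmeas hindep hunif δ hδ0 hδ1 k hk2 hkn
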